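/- Let t ≥ 3 and n ≥ 2t + 17 be integers, and let H be a 3-uniform hypergraph on n vertices with minimum degree δ₁(H) ≥ g(n,t) that contains no linear path of length t + 1. If P = (x₀, x₁, ..., x_{2t}) is a linear path of length t in H, then for every k ∈ [0, t−1], d_P(0, 2k+1) + d_P(2t, 2k+1) ≤ n − 2t − 1. -/

import Mathlib

/-!
If the sum exceeded `n - 2t - 1`, the number of vertices off `P`, there would be distinct
vertices `y₁, y₂` off `P` with `{x₀, x_{2k+1}, y₁}` and `{x_{2t}, x_{2k+1}, y₂}` edges. Dropping
the edge `{x_{2k}, x_{2k+1}, x_{2k+2}}` and rerouting through these two edges gives the linear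
path `(x_{2k}, …, x₀, y₁, x_{2k+1}, y₂, x_{2t}, …, x_{2k+2})` of length `t + 1`.
-/

/-- The degree of a vertex `v` in a hypergraph with edge set `E`:
the number of edges containing `v`. -/
def hdegree {V : Type*} [DecidableEq V] (E : Finset (Finset V)) (v : V) : ℕ :=
  (E.filter (fun e => v ∈ e)).card

/-- The hypergraph with edge set `E` contains a linear path of length `k`:
a collection of `k` (distinct) edges `e₁, …, e_k` such that `|eᵢ ∩ e_j| = 1`
if `|i - j| = 1` and `eᵢ ∩ e_j = ∅` otherwise. -/
def HasLinearPath {V : Type*} [DecidableEq V] (E : Finset (Finset V)) (k : ℕ) : Prop :=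
  ∃ f : Fin k → Finset V, Function.Injective f ∧ (∀ i, f i ∈ E) ∧
    ∀ i j : Fin k, i ≠ j →
      (((i : ℕ) + 1 = j ∨ (j : ℕ) + 1 = i) → (f i ∩ f j).card = 1) ∧
      (¬((i : ℕ) + 1 = j ∨ (j : ℕ) + 1 = i) → f i ∩ f j = ∅)

/-- `x = (x₀, x₁, …, x_{2t})` is a linear path of length `t` in the hypergraph with
edge set `E`: the `2t+1` vertices are distinct and `{x_{2i}, x_{2i+1}, x_{2i+2}} ∈ E`
for each `i ∈ [0, t-1]`. -/
def IsLinearPathSeq {V : Type*} [DecidableEq V] (E : Finset (Finset V)) (t : ℕ)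
    (x : Fin (2 * t + 1) → V) : Prop :=
  Function.Injective x ∧
  ∀ i : Fin t,
    ({x ⟨2 * i, by have := i.isLt; omega⟩,
      x ⟨2 * i + 1, by have := i.isLt; omega⟩,
      x ⟨2 * i + 2, by have := i.isLt; omega⟩} : Finset V) ∈ E

/-- `dP E x a b` is the number of vertices `y` outside the path `x` such that
`{x_a, x_b, y}` is an edge; this is `d_P(a, b)` in the paper. -/
def dP {V : Type*} [Fintype V] [DecidableEq V] (E : Finset (Finset V)) {t : ℕ}
    (x : Fin (2 * t + 1) → V) (a b : Fin (2 * t + 1)) : ℕ :=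
  (Finset.univ.filter
    (fun y => (∀ i, y ≠ x i) ∧ ({x a, x b, y} : Finset V) ∈ E)).card

/-- The function `g(n,t)` from the paper:
`g(n,t) = ((t-1)/2)n + (3/2)t² - (9/2)t + 6` for odd `t`, and
`g(n,t) = ((t-2)/2)n + (3/2)t² - (5/2)t + 6` for even `t`. -/
def gQ (n t : ℕ) : ℚ :=
  if Odd t then ((t : ℚ) - 1) / 2 * n + 3 / 2 * t ^ 2 - 9 / 2 * t + 6
  else ((t : ℚ) - 2) / 2 * n + 3 / 2 * t ^ 2 - 5 / 2 * t + 6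

open Finset

theorem Finset.exists_mem_mem_ne_of_card_lt_add {α : Type*} {A B C : Finset α}
    (hA : A ⊆ C) (hB : B ⊆ C) (hC : 2 ≤ #C) (h : #C < #A + #B) :
    ∃ a ∈ A, ∃ b ∈ B, a ≠ b := by
  by_contra! hAB
  have := card_le_card hA
  have := card_le_card hB
  obtain ⟨a, ha⟩ := A.eq_empty_or_nonempty.resolve_left fun hA₀ => by
    rw [hA₀, card_empty] at h; omega
  obtain ⟨b, hb⟩ := B.eq_empty_or_nonempty.resolve_left fun hB₀ => by
    rw [hB₀, card_empty] at h; omega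
  have : #A ≤ 1 := card_le_one.2 fun a₁ h₁ a₂ h₂ =>
    (hAB a₁ h₁ b hb).trans (hAB a₂ h₂ b hb).symm
  have : #B ≤ 1 := card_le_one.2 fun b₁ h₁ b₂ h₂ =>
    (hAB a ha b₁ h₁).symm.trans (hAB a ha b₂ h₂)
  omega

section Splice

variable {V : Type*} {t : ℕ}

def splice (x : Fin (2 * t + 1) → V) (k : Fin t) (y₁ y₂ : V)
    (p : Fin (2 * (t + 1) + 1)) : V :=
  if h₀ : (p : ℕ) ≤ 2 * k then x ⟨2 * k - p, by omega⟩
  else if h₁ : (p : ℕ) = 2 * k + 1 then y₁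
  else if h₂ : (p : ℕ) = 2 * k + 2 then x ⟨2 * k + 1, by omega⟩
  else if h₃ : (p : ℕ) = 2 * k + 3 then y₂
  else x ⟨2 * t + 2 * k + 4 - p, by omega⟩

variable {x : Fin (2 * t + 1) → V} {k : Fin t} {y₁ y₂ : V}

theorem splice_eq_of_add_eq_left {p : Fin (2 * (t + 1) + 1)} {a : Fin (2 * t + 1)}
    (ha : (a : ℕ) + p = 2 * k) : splice x k y₁ y₂ p = x a := by
  rw [splice, dif_pos (by omega)]
  congr
  omega

theorem splice_eq_of_add_eq_right {p : Fin (2 * (t + 1) + 1)} {a : Fin (2 * t + 1)}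
    (ha : (a : ℕ) + p = 2 * t + 2 * k + 4) : splice x k y₁ y₂ p = x a := by
  have := a.isLt
  rw [splice, dif_neg (by omega), dif_neg (by omega), dif_neg (by omega), dif_neg (by omega)]
  congr
  omega

theorem splice_eq_left_end {p : Fin (2 * (t + 1) + 1)} (hp : (p : ℕ) = 2 * k + 1) :
    splice x k y₁ y₂ p = y₁ := by
  rw [splice, dif_neg (by omega), dif_pos hp]

theorem splice_eq_middle {p : Fin (2 * (t + 1) + 1)} {a : Fin (2 * t + 1)}
    (hp : (p : ℕ) = 2 * k + 2) (ha : (a : ℕ) = 2 * k + 1) : splice x k y₁ y₂ p = x a := by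
  rw [splice, dif_neg (by omega), dif_neg (by omega), dif_pos hp]
  congr
  omega

theorem splice_eq_right_end {p : Fin (2 * (t + 1) + 1)} (hp : (p : ℕ) = 2 * k + 3) :
    splice x k y₁ y₂ p = y₂ := by
  rw [splice, dif_neg (by omega), dif_neg (by omega), dif_neg (by omega), dif_pos hp]

theorem splice_injective (hx : Function.Injective x) (hy₁ : ∀ i, y₁ ≠ x i)
    (hy₂ : ∀ i, y₂ ≠ x i) (hne : y₁ ≠ y₂) :
    Function.Injective (splice x k y₁ y₂) := by
  intro p q h
  have hx' {a b : Fin (2 * t + 1)} (hab : x a = x b) : (a : ℕ) = b := congrArg Fin.val (hx hab)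
  simp only [splice] at h
  split_ifs at h <;>
    first
      | exact Fin.ext (by omega)
      | exact Fin.ext (by have := hx' h; simp only at this; omega)
      | exact absurd h (hy₁ _) | exact absurd h.symm (hy₁ _)
      | exact absurd h (hy₂ _) | exact absurd h.symm (hy₂ _)
      | exact absurd h hne | exact absurd h.symm hne

end Splice

section LinearPath

variable {V : Type*} [DecidableEq V] {E : Finset (Finset V)} {t : ℕ} {x : Fin (2 * t + 1) → V}

-- The `i`-th edge is the image of the window `[2i, 2i+2]` of indices; as `x` is injective,
-- edges meet exactly as their windows do.
theorem IsLinearPathSeq.hasLinearPath (hx : IsLinearPathSeq E t x) : HasLinearPath E t := by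
  let S : Fin t → Finset (Fin (2 * t + 1)) := fun i =>
    univ.filter fun p => 2 * (i : ℕ) ≤ p ∧ (p : ℕ) ≤ 2 * i + 2
  have edge_eq (i : Fin t) : (S i).image x =
      {x ⟨2 * i, by omega⟩, x ⟨2 * i + 1, by omega⟩, x ⟨2 * i + 2, by omega⟩} := by
    ext v
    simp only [S, mem_image, mem_filter, mem_univ, true_and, mem_insert, mem_singleton]
    constructor
    · rintro ⟨p, hp, rfl⟩
      rcases (by omega : (p : ℕ) = 2 * i ∨ (p : ℕ) = 2 * i + 1 ∨ (p : ℕ) = 2 * i + 2)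
        with h | h | h <;> simp [← h]
    · rintro (rfl | rfl | rfl) <;> exact ⟨_, by simp only; omega, rfl⟩
  refine ⟨fun i => (S i).image x, fun i j hij => ?_,
    fun i => by simpa only [edge_eq] using hx.2 i,
    fun i j _ => ⟨fun hadj => ?_, fun hadj => ?_⟩⟩
  · have h := (image_injective hx.1 hij).le
      (show (⟨2 * i, by omega⟩ : Fin (2 * t + 1)) ∈ S i by simp [S])
    have h' := (image_injective hx.1 hij).ge
      (show (⟨2 * j, by omega⟩ : Fin (2 * t + 1)) ∈ S j by simp [S])
    simp only [S, mem_filter] at h h'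
    omega
  · rw [← image_inter _ _ hx.1, card_image_of_injective _ hx.1, card_eq_one]
    refine ⟨⟨2 * max (i : ℕ) j, by omega⟩, ?_⟩
    ext p
    simp only [S, mem_inter, mem_filter, mem_univ, true_and, mem_singleton, Fin.ext_iff]
    omega
  · rw [← image_inter _ _ hx.1, image_eq_empty, eq_empty_iff_forall_notMem]
    intro p
    simp only [S, mem_inter, mem_filter, mem_univ, true_and]
    omega

theorem IsLinearPathSeq.triple_mem_rev (hx : IsLinearPathSeq E t x) (j : Fin t) :
    ({x ⟨2 * j + 2, by omega⟩, x ⟨2 * j + 1, by omega⟩, x ⟨2 * j, by omega⟩} : Finset V)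
      ∈ E := by
  convert hx.2 j using 1
  rw [insert_comm, pair_comm, insert_comm]

theorem IsLinearPathSeq.splice (hx : IsLinearPathSeq E t x) (k : Fin t) {y₁ y₂ : V}
    (hy₁ : ∀ i, y₁ ≠ x i) (hy₂ : ∀ i, y₂ ≠ x i) (hne : y₁ ≠ y₂)
    (h₁ : ({x ⟨0, by omega⟩, x ⟨2 * k + 1, by omega⟩, y₁} : Finset V) ∈ E)
    (h₂ : ({x ⟨2 * t, by omega⟩, x ⟨2 * k + 1, by omega⟩, y₂} : Finset V) ∈ E) :
    IsLinearPathSeq E (t + 1) (splice x k y₁ y₂) := by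
  refine ⟨splice_injective hx.1 hy₁ hy₂ hne, fun i => ?_⟩
  rcases lt_or_ge (i : ℕ) k with hi | hi
  · set j := (k : ℕ) - 1 - i
    rw [splice_eq_of_add_eq_left (a := ⟨2 * j + 2, by omega⟩) (by simp only; omega),
      splice_eq_of_add_eq_left (a := ⟨2 * j + 1, by omega⟩) (by simp only; omega),
      splice_eq_of_add_eq_left (a := ⟨2 * j, by omega⟩) (by simp only; omega)]
    exact hx.triple_mem_rev ⟨j, by omega⟩
  rcases hi.eq_or_lt with hi | hi
  · rw [splice_eq_of_add_eq_left (a := ⟨0, by omega⟩) (by simp only; omega),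
      splice_eq_left_end (by simp only; omega),
      splice_eq_middle (a := ⟨2 * k + 1, by omega⟩) (by simp only; omega) rfl, pair_comm]
    exact h₁
  rcases (Nat.succ_le_of_lt hi).eq_or_lt with hi | hi
  · rw [splice_eq_middle (a := ⟨2 * k + 1, by omega⟩) (by simp only; omega) rfl,
      splice_eq_right_end (by simp only; omega),
      splice_eq_of_add_eq_right (a := ⟨2 * t, by omega⟩) (by simp only; omega), pair_comm,
      insert_comm]
    exact h₂
  · set j := t + k + 1 - (i : ℕ)
    rw [splice_eq_of_add_eq_right (a := ⟨2 * j + 2, by omega⟩) (by simp only; omega),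
      splice_eq_of_add_eq_right (a := ⟨2 * j + 1, by omega⟩) (by simp only; omega),
      splice_eq_of_add_eq_right (a := ⟨2 * j, by omega⟩) (by simp only; omega)]
    exact hx.triple_mem_rev ⟨j, by omega⟩

end LinearPath

theorem dP_odd_sum_le_n
    (t n : ℕ) (ht : t ≥ 3) (hn : n ≥ 2 * t + 17)
    (V : Type*) [Fintype V] [DecidableEq V] (hV : Fintype.card V = n)
    (E : Finset (Finset V))
    (hfree : ¬ HasLinearPath E (t + 1))
    (x : Fin (2 * t + 1) → V) (hx : IsLinearPathSeq E t x)
    (k : ℕ) (hk : k ≤ t - 1) :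
    dP E x ⟨0, by omega⟩ ⟨2 * k + 1, by omega⟩ +
      dP E x ⟨2 * t, by omega⟩ ⟨2 * k + 1, by omega⟩ ≤ n - 2 * t - 1 := by
  by_contra! hcon
  have houtside : #(univ.image x)ᶜ = n - (2 * t + 1) := by
    rw [card_compl, card_image_of_injective _ hx.1, card_univ, Fintype.card_fin, hV]
  have hsub (P : V → Prop) [DecidablePred P] :
      univ.filter (fun y => (∀ i, y ≠ x i) ∧ P y) ⊆ (univ.image x)ᶜ := fun y hy => by
    simpa [eq_comm] using (mem_filter.1 hy).2.1
  obtain ⟨y₁, hy₁, y₂, hy₂, hne⟩ := exists_mem_mem_ne_of_card_lt_add (hsub _) (hsub _)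
    (by omega) (by rw [houtside]; unfold dP at hcon; omega)
  rw [mem_filter] at hy₁ hy₂
  exact hfree
    (hx.splice ⟨k, by omega⟩ hy₁.2.1 hy₂.2.1 hne hy₁.2.2 hy₂.2.2).hasLinearPath
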